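/- arXiv:0906.1125 — 8 statements merged into one kernel-verified Lean document; each statement's English description precedes it below -/
import Mathlib

section
/- Let R be a ring and suppose the category of left R-modules carries an additive closed symmetric monoidal structure ∧. Set Λ := R ∧ R, and endow Λ with two right R-module actions: x ⊙₁ r := (ρᵣ ∧ 𝟙_R)(x) and x ⊙₂ r := (𝟙_R ∧ ρᵣ)(x), where ρᵣ : R → R is the left R-module endomorphism t ↦ t·r. Then ⊙₁ and ⊙₂ are well-defined right R-module structures that commute with each other and with the left R-action on Λ, and there is an isomorphism of left R-modules ((Λ, using ⊙₁) ⊗[R] A, using the remaining action ⊙₂) ⊗[R] B ≅ A ∧ B, natural in both A and B. -/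
open CategoryTheory MonoidalCategory
open scoped TensorProduct

universe u

variable (R : Type u) [Ring R]
variable [MonoidalCategory (ModuleCat.{u} R)] [SymmetricCategory (ModuleCat.{u} R)]
variable [MonoidalClosed (ModuleCat.{u} R)] [MonoidalPreadditive (ModuleCat.{u} R)]

/-- Right multiplication by `r`, as an endomorphism of `R` in `ModuleCat R`. -/
def rho (r : R) : ModuleCat.of R R ⟶ ModuleCat.of R R :=
  ModuleCat.ofHom
    { toFun := fun t => t * r
      map_add' := fun a b => add_mul a b r
      map_smul' := fun c t => by simp [smul_eq_mul, mul_assoc] }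

/-- `Λ = R ∧ R`. -/
noncomputable abbrev Lambda : ModuleCat.{u} R := ModuleCat.of R R ⊗ ModuleCat.of R R

/-- The first right action `x ⊙₁ r = (ρ_r ∧ 𝟙)(x)` on `Λ = R ∧ R`. -/
noncomputable def odot1 (r : R) (x : ↥(Lambda R)) : ↥(Lambda R) :=
  (rho R r ▷ ModuleCat.of R R) x

/-- The second right action `x ⊙₂ r = (𝟙 ∧ ρ_r)(x)` on `Λ = R ∧ R`. -/
noncomputable def odot2 (r : R) (x : ↥(Lambda R)) : ↥(Lambda R) :=
  (ModuleCat.of R R ◁ rho R r) x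

/-- The submodule of `(Λ ⊗[ℤ] A) ⊗[ℤ] B` of relations defining the tensor product
`(Λ ⊗[R,⊙₁] A) ⊗[R,⊙₂] B` over the two right `R`-actions `⊙₁` and `⊙₂` on `Λ`. -/
noncomputable def rel (A B : ModuleCat.{u} R) :
    Submodule R ((↥(Lambda R) ⊗[ℤ] ↥A) ⊗[ℤ] ↥B) :=
  Submodule.span R
    ({ z | ∃ (r : R) (x : ↥(Lambda R)) (a : ↥A) (b : ↥B),
        z = (odot1 R r x ⊗ₜ[ℤ] a) ⊗ₜ[ℤ] b - (x ⊗ₜ[ℤ] (r • a)) ⊗ₜ[ℤ] b } ∪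
      { z | ∃ (r : R) (x : ↥(Lambda R)) (a : ↥A) (b : ↥B),
        z = (odot2 R r x ⊗ₜ[ℤ] a) ⊗ₜ[ℤ] b - (x ⊗ₜ[ℤ] a) ⊗ₜ[ℤ] (r • b) })

/-- The iterated tensor product `((Λ, ⊙₁) ⊗[R] A, ⊙₂) ⊗[R] B`, realized as the quotient of
`(Λ ⊗[ℤ] A) ⊗[ℤ] B` by the relations identifying the right actions `⊙₁`, `⊙₂` on `Λ` with the
left actions on `A` and `B` respectively; it is a left `R`-module via the left action on `Λ`. -/
noncomputable def TT (A B : ModuleCat.{u} R) : Type u :=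
  ((↥(Lambda R) ⊗[ℤ] ↥A) ⊗[ℤ] ↥B) ⧸ rel R A B

noncomputable instance (A B : ModuleCat.{u} R) : AddCommGroup (TT R A B) :=
  inferInstanceAs (AddCommGroup (((↥(Lambda R) ⊗[ℤ] ↥A) ⊗[ℤ] ↥B) ⧸ rel R A B))

noncomputable instance (A B : ModuleCat.{u} R) : Module R (TT R A B) :=
  inferInstanceAs (Module R (((↥(Lambda R) ⊗[ℤ] ↥A) ⊗[ℤ] ↥B) ⧸ rel R A B))

/-- A morphism of `ModuleCat R`, viewed as a `ℤ`-linear map. -/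
def toIntHom {A B : ModuleCat.{u} R} (f : A ⟶ B) : ↥A →ₗ[ℤ] ↥B :=
  (LinearMap.toAddMonoidHom f.hom).toIntLinearMap

/-!
Write `â : R ⟶ A` for `t ↦ t • a`. The comparison map `[x ⊗ a ⊗ b] ↦ (â ∧ b̂)(x)` respects the
relations because `ρ_r ≫ â` is the map attached to `r • a`, and for `A = B = R` it is inverted
by `y ↦ [y ⊗ 1 ⊗ 1]`.
Both sides are functorial in each variable, the left side preserves epimorphisms and is generated
by the images of the summand inclusions of a free module, and `− ∧ B`, `A ∧ −` preserve colimits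
because `∧` is closed and symmetric. An Eilenberg–Watts argument (coproducts of copies of `R`, then
cokernels of maps between free modules) spreads the isomorphism from `(R, R)` first to all `(R, B)`
and then to all `(A, B)`.
-/

namespace ModuleCat

open CategoryTheory.Limits

variable {R : Type u} [Ring R]

noncomputable def finsuppIsColimitCofan (ι : Type u) :
    IsColimit (Cofan.mk (ModuleCat.of R (ι →₀ R)) fun i => ModuleCat.ofHom (Finsupp.lsingle i)) :=
  Cofan.IsColimit.mk _
    (fun s => ModuleCat.ofHom (Finsupp.lsum ℕ fun i => (s.inj i).hom))
    (fun s i => ModuleCat.hom_ext (LinearMap.ext fun r => Finsupp.lsum_single ℕ _ i r))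
    (fun s m hm => ModuleCat.hom_ext <| Finsupp.lhom_ext' fun i => LinearMap.ext fun r => by
      simpa using ConcreteCategory.congr_hom (hm i) r)

lemma exists_isColimit_cokernelCofork_finsupp (A : ModuleCat.{u} R) :
    ∃ (ι κ : Type u) (d : ModuleCat.of R (κ →₀ R) ⟶ ModuleCat.of R (ι →₀ R))
      (p : ModuleCat.of R (ι →₀ R) ⟶ A) (w : d ≫ p = 0),
      Nonempty (IsColimit (CokernelCofork.ofπ p w)) := by
  let p := Finsupp.linearCombination R (id : A → A)
  let K := LinearMap.ker p
  let d := K.subtype ∘ₗ Finsupp.linearCombination R (id : K → K)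
  have hd : LinearMap.range d = LinearMap.ker p := by
    rw [LinearMap.range_comp,
      LinearMap.range_eq_top.2 (Finsupp.linearCombination_id_surjective R K), Submodule.map_top,
      Submodule.range_subtype]
  let S : ShortComplex (ModuleCat.{u} R) :=
    .mk (ofHom d) (ofHom p) (ModuleCat.hom_ext (LinearMap.range_le_ker_iff.1 hd.le))
  have hS : S.Exact := S.moduleCat_exact_iff_range_eq_ker.2 hd
  have : Epi S.g :=
    (ModuleCat.epi_iff_surjective _).2 (Finsupp.linearCombination_id_surjective R A)
  exact ⟨A, K, S.f, S.g, S.zero, ⟨hS.gIsCokernel⟩⟩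

end ModuleCat

namespace CategoryTheory.NatTrans

open Limits

theorem isIso_app_of_isColimit_cokernelCofork {C D : Type*} [Category C] [Category D]
    [HasZeroMorphisms C] [HasZeroMorphisms D] {F G : C ⥤ D} [F.PreservesZeroMorphisms]
    [G.PreservesZeroMorphisms] (τ : G ⟶ F) {X Y Z : C} {d : X ⟶ Y} {p : Y ⟶ Z} {w : d ≫ p = 0}
    (hp : IsColimit (CokernelCofork.ofπ p w)) [PreservesColimit (parallelPair d 0) F]
    [Epi (G.map p)] [Epi (τ.app X)] [IsIso (τ.app Y)] : IsIso (τ.app Z) := by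
  have hFp := CokernelCofork.mapIsColimit _ hp F
  have : Epi (F.map p) := Cofork.IsColimit.epi hFp
  have hm : F.map d ≫ inv (τ.app Y) ≫ G.map p = 0 := by
    rw [← cancel_epi (τ.app X), ← Category.assoc, ← τ.naturality, Category.assoc,
      IsIso.hom_inv_id_assoc, ← G.map_comp, w, G.map_zero, comp_zero]
  obtain ⟨u, hu⟩ : ∃ u : F.obj Z ⟶ G.obj Z, F.map p ≫ u = inv (τ.app Y) ≫ G.map p :=
    ⟨_, (CokernelCofork.IsColimit.desc' hFp _ hm).2⟩
  refine ⟨u, ?_, ?_⟩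
  · rw [← cancel_epi (G.map p), reassoc_of% τ.naturality, hu, IsIso.hom_inv_id_assoc,
      Category.comp_id]
  · rw [← cancel_epi (F.map p), reassoc_of% hu, τ.naturality,
      IsIso.inv_hom_id_assoc, Category.comp_id]

theorem isIso_app_of_isColimit_cofan {C D : Type*} [Category C] [Category D]
    {F G : C ⥤ D} (τ : G ⟶ F) {ι : Type*} {P : ι → C} {X : C} {inj : ∀ i, P i ⟶ X}
    (hX : IsColimit (Cofan.mk X inj)) [PreservesColimit (Discrete.functor P) F]
    [∀ i, IsIso (τ.app (P i))]
    (hG : ∀ {W : D} (f g : G.obj X ⟶ W), (∀ i, G.map (inj i) ≫ f = G.map (inj i) ≫ g) → f = g) :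
    IsIso (τ.app X) := by
  have hFX := isColimitCofanMkObjOfIsColimit F P inj hX
  let s : F.obj X ⟶ G.obj X := Cofan.IsColimit.desc hFX fun i => inv (τ.app (P i)) ≫ G.map (inj i)
  have hs (i : ι) : F.map (inj i) ≫ s = inv (τ.app (P i)) ≫ G.map (inj i) :=
    Cofan.IsColimit.fac hFX _ i
  refine ⟨s, hG _ _ fun i => ?_, Cofan.IsColimit.hom_ext hFX _ _ fun i => ?_⟩
  · rw [reassoc_of% τ.naturality, hs, IsIso.hom_inv_id_assoc, Category.comp_id]
  · rw [cofan_mk_inj, reassoc_of% hs, τ.naturality, IsIso.inv_hom_id_assoc]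
    exact (Category.comp_id _).symm

theorem isIso_app_of_isIso_app_ring {R : Type u} [Ring R]
    {F G : ModuleCat.{u} R ⥤ ModuleCat.{u} R} (τ : G ⟶ F)
    [PreservesColimits F] [F.PreservesZeroMorphisms] [G.PreservesZeroMorphisms]
    [G.PreservesEpimorphisms]
    (hG : ∀ (ι : Type u) {W : ModuleCat.{u} R} (f g : G.obj (ModuleCat.of R (ι →₀ R)) ⟶ W),
      (∀ i, G.map (ModuleCat.ofHom (Finsupp.lsingle i)) ≫ f =
        G.map (ModuleCat.ofHom (Finsupp.lsingle i)) ≫ g) → f = g)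
    [IsIso (τ.app (ModuleCat.of R R))] (A : ModuleCat.{u} R) : IsIso (τ.app A) := by
  have hfree (ι : Type u) : IsIso (τ.app (ModuleCat.of R (ι →₀ R))) :=
    τ.isIso_app_of_isColimit_cofan (ModuleCat.finsuppIsColimitCofan ι) (hG ι)
  obtain ⟨ι, κ, d, p, w, ⟨hp⟩⟩ := A.exists_isColimit_cokernelCofork_finsupp
  have : Epi p := Cofork.IsColimit.epi hp
  have := hfree ι
  have := hfree κ
  have : Epi (τ.app (ModuleCat.of R (κ →₀ R))) := IsIso.epi_of_iso _
  exact τ.isIso_app_of_isColimit_cokernelCofork hp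

end CategoryTheory.NatTrans

section RightActions

variable {R : Type u} [Ring R]

lemma rho_one : rho R 1 = 𝟙 (ModuleCat.of R R) :=
  ModuleCat.hom_ext (LinearMap.ext fun t => mul_one t)

lemma rho_comp_rho (r s : R) : rho R r ≫ rho R s = rho R (r * s) :=
  ModuleCat.hom_ext (LinearMap.ext fun t => mul_assoc t r s)

lemma rho_add (r s : R) : rho R (r + s) = rho R r + rho R s :=
  ModuleCat.hom_ext (LinearMap.ext fun t => mul_add t r s)

variable [MonoidalCategory (ModuleCat.{u} R)]

lemma odot1_one (x : Lambda R) : odot1 R 1 x = x := by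
  rw [odot1, rho_one, id_whiskerRight]; rfl

lemma odot2_one (x : Lambda R) : odot2 R 1 x = x := by
  rw [odot2, rho_one, whiskerLeft_id]; rfl

lemma odot1_odot1 (r s : R) (x : Lambda R) : odot1 R s (odot1 R r x) = odot1 R (r * s) x := by
  rw [odot1, odot1, odot1, ← rho_comp_rho, comp_whiskerRight]; rfl

lemma odot2_odot2 (r s : R) (x : Lambda R) : odot2 R s (odot2 R r x) = odot2 R (r * s) x := by
  rw [odot2, odot2, odot2, ← rho_comp_rho, whiskerLeft_comp]; rfl

lemma odot1_add (r : R) (x y : Lambda R) : odot1 R r (x + y) = odot1 R r x + odot1 R r y :=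
  map_add _ x y

lemma odot2_add (r : R) (x y : Lambda R) : odot2 R r (x + y) = odot2 R r x + odot2 R r y :=
  map_add _ x y

lemma odot1_smul (c r : R) (x : Lambda R) : odot1 R r (c • x) = c • odot1 R r x :=
  map_smul _ c x

lemma odot2_smul (c r : R) (x : Lambda R) : odot2 R r (c • x) = c • odot2 R r x :=
  map_smul _ c x

lemma odot1_odot2 (r s : R) (x : Lambda R) :
    odot1 R r (odot2 R s x) = odot2 R s (odot1 R r x) := by
  simp only [odot1, odot2, ← ModuleCat.comp_apply, whisker_exchange]

variable [MonoidalPreadditive (ModuleCat.{u} R)]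

lemma add_odot1 (r s : R) (x : Lambda R) : odot1 R (r + s) x = odot1 R r x + odot1 R s x := by
  rw [odot1, rho_add, MonoidalPreadditive.add_whiskerRight]; rfl

lemma add_odot2 (r s : R) (x : Lambda R) : odot2 R (r + s) x = odot2 R r x + odot2 R s x := by
  rw [odot2, rho_add, MonoidalPreadditive.whiskerLeft_add]; rfl

end RightActions

section SpanSingleton

variable {R : Type u} [Ring R]

abbrev spanSingletonHom (A : ModuleCat.{u} R) (a : A) : ModuleCat.of R R ⟶ A :=
  ModuleCat.ofHom (LinearMap.toSpanSingleton R A a)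

lemma spanSingletonHom_add (A : ModuleCat.{u} R) (a a' : A) :
    spanSingletonHom A (a + a') = spanSingletonHom A a + spanSingletonHom A a' :=
  ModuleCat.hom_ext (LinearMap.ext fun t => smul_add t a a')

lemma spanSingletonHom_smul (A : ModuleCat.{u} R) (r : R) (a : A) :
    spanSingletonHom A (r • a) = rho R r ≫ spanSingletonHom A a :=
  ModuleCat.hom_ext (LinearMap.ext fun t => (mul_smul t r a).symm)

lemma spanSingletonHom_comp {A A' : ModuleCat.{u} R} (a : A) (f : A ⟶ A') :
    spanSingletonHom A a ≫ f = spanSingletonHom A' (f a) :=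
  ModuleCat.hom_ext (LinearMap.ext fun t => f.hom.map_smul t a)

lemma spanSingletonHom_self (r : R) : spanSingletonHom (ModuleCat.of R R) r = rho R r := rfl

variable [MonoidalCategory (ModuleCat.{u} R)] {A B : ModuleCat.{u} R}

lemma tensorHom_apply_odot1 (r : R) (x : Lambda R) (a : A) (b : B) :
    (spanSingletonHom A a ⊗ₘ spanSingletonHom B b) (odot1 R r x) =
      (spanSingletonHom A (r • a) ⊗ₘ spanSingletonHom B b) x := by
  rw [odot1, ← ModuleCat.comp_apply, ← tensorHom_id, tensorHom_comp_tensorHom, Category.id_comp,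
    spanSingletonHom_smul]

lemma tensorHom_apply_odot2 (r : R) (x : Lambda R) (a : A) (b : B) :
    (spanSingletonHom A a ⊗ₘ spanSingletonHom B b) (odot2 R r x) =
      (spanSingletonHom A a ⊗ₘ spanSingletonHom B (r • b)) x := by
  rw [odot2, ← ModuleCat.comp_apply, ← id_tensorHom, tensorHom_comp_tensorHom, Category.id_comp,
    spanSingletonHom_smul]

lemma tensorHom_spanSingletonHom_self (a b : R) (x : Lambda R) :
    (spanSingletonHom (ModuleCat.of R R) a ⊗ₘ spanSingletonHom (ModuleCat.of R R) b) x =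
      odot2 R b (odot1 R a x) := by
  rw [spanSingletonHom_self, spanSingletonHom_self, MonoidalCategory.tensorHom_def]; rfl

end SpanSingleton

@[simp]
lemma toIntHom_apply {R : Type u} [Ring R] {A B : ModuleCat.{u} R} (f : A ⟶ B) (a : A) :
    toIntHom R f a = f a :=
  rfl

namespace TT

section Quotient

variable {R : Type u} [Ring R] [MonoidalCategory (ModuleCat.{u} R)] {A B : ModuleCat.{u} R}

noncomputable def mk : (Lambda R ⊗[ℤ] A) ⊗[ℤ] B →ₗ[R] TT R A B :=
  (rel R A B).mkQ

lemma mk_surjective : Function.Surjective (mk : _ →ₗ[R] TT R A B) :=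
  Submodule.mkQ_surjective _

lemma mk_odot1 (r : R) (x : Lambda R) (a : A) (b : B) :
    mk ((odot1 R r x ⊗ₜ a) ⊗ₜ b) = mk ((x ⊗ₜ (r • a)) ⊗ₜ b) :=
  (Submodule.Quotient.eq _).2 (Submodule.subset_span (Or.inl ⟨r, x, a, b, rfl⟩))

lemma mk_odot2 (r : R) (x : Lambda R) (a : A) (b : B) :
    mk ((odot2 R r x ⊗ₜ a) ⊗ₜ b) = mk ((x ⊗ₜ a) ⊗ₜ (r • b)) :=
  (Submodule.Quotient.eq _).2 (Submodule.subset_span (Or.inr ⟨r, x, a, b, rfl⟩))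

lemma hom_ext {C : Type*} [AddCommGroup C] [Module R C] {f g : TT R A B →ₗ[R] C}
    (h : ∀ x a b, f (mk ((x ⊗ₜ a) ⊗ₜ b)) = g (mk ((x ⊗ₜ a) ⊗ₜ b))) : f = g :=
  Submodule.linearMap_qext _ (by ext x a b; exact h x a b)

noncomputable def map {A' B' : ModuleCat.{u} R} (f : A ⟶ A') (g : B ⟶ B') :
    TT R A B →ₗ[R] TT R A' B' :=
  Submodule.mapQ _ _ (TensorProduct.AlgebraTensorModule.map
      (TensorProduct.AlgebraTensorModule.map LinearMap.id (toIntHom R f)) (toIntHom R g)) <| by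
    refine Submodule.span_le.2 ?_
    rintro _ (⟨r, x, a, b, rfl⟩ | ⟨r, x, a, b, rfl⟩) <;>
      simp only [SetLike.mem_coe, Submodule.mem_comap, map_sub,
        TensorProduct.AlgebraTensorModule.map_tmul]
    · exact Submodule.subset_span (Or.inl ⟨r, x, f a, g b, by simp⟩)
    · exact Submodule.subset_span (Or.inr ⟨r, x, f a, g b, by simp⟩)

lemma map_mk_tmul {A' B' : ModuleCat.{u} R} (f : A ⟶ A') (g : B ⟶ B') (x : Lambda R) (a : A)
    (b : B) : map f g (mk ((x ⊗ₜ a) ⊗ₜ b)) = mk ((x ⊗ₜ f a) ⊗ₜ g b) :=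
  rfl

lemma map_surjective {A' B' : ModuleCat.{u} R} {f : A ⟶ A'} {g : B ⟶ B'}
    (hf : Function.Surjective f) (hg : Function.Surjective g) :
    Function.Surjective (map f g) := by
  intro t
  obtain ⟨z, rfl⟩ := mk_surjective t
  obtain ⟨w, rfl⟩ := TensorProduct.map_surjective (g' := toIntHom R g)
    (TensorProduct.map_surjective (g := LinearMap.id) (g' := toIntHom R f)
      Function.surjective_id hf) hg z
  exact ⟨mk w, rfl⟩

lemma map_zero_left {A' : ModuleCat.{u} R} : map (0 : A ⟶ A') (𝟙 B) = 0 :=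
  hom_ext fun x a b => by simp [map_mk_tmul]

lemma map_zero_right {B' : ModuleCat.{u} R} : map (𝟙 A) (0 : B ⟶ B') = 0 :=
  hom_ext fun x a b => by simp [map_mk_tmul]

variable (R) in
noncomputable def functorFst (B : ModuleCat.{u} R) : ModuleCat.{u} R ⥤ ModuleCat.{u} R where
  obj A := ModuleCat.of R (TT R A B)
  map f := ModuleCat.ofHom (map f (𝟙 B))
  map_id _ := ModuleCat.hom_ext (hom_ext fun _ _ _ => rfl)
  map_comp _ _ := ModuleCat.hom_ext (hom_ext fun _ _ _ => rfl)

variable (R) in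
noncomputable def functorSnd (A : ModuleCat.{u} R) : ModuleCat.{u} R ⥤ ModuleCat.{u} R where
  obj B := ModuleCat.of R (TT R A B)
  map g := ModuleCat.ofHom (map (𝟙 A) g)
  map_id _ := ModuleCat.hom_ext (hom_ext fun _ _ _ => rfl)
  map_comp _ _ := ModuleCat.hom_ext (hom_ext fun _ _ _ => rfl)

instance (B : ModuleCat.{u} R) : (functorFst R B).PreservesZeroMorphisms where
  map_zero _ _ := ModuleCat.hom_ext map_zero_left

instance (A : ModuleCat.{u} R) : (functorSnd R A).PreservesZeroMorphisms where
  map_zero _ _ := ModuleCat.hom_ext map_zero_right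

instance (B : ModuleCat.{u} R) : (functorFst R B).PreservesEpimorphisms where
  preserves f _ := (ModuleCat.epi_iff_surjective _).2 <|
    map_surjective ((ModuleCat.epi_iff_surjective f).1 ‹_›) Function.surjective_id

instance (A : ModuleCat.{u} R) : (functorSnd R A).PreservesEpimorphisms where
  preserves g _ := (ModuleCat.epi_iff_surjective _).2 <|
    map_surjective Function.surjective_id ((ModuleCat.epi_iff_surjective g).1 ‹_›)

end Quotient

section Free

variable {R : Type u} [Ring R] [MonoidalCategory (ModuleCat.{u} R)] {ι : Type u}
  {C : Type*} [AddCommGroup C] [Module R C]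

lemma hom_ext_finsupp_fst {B : ModuleCat.{u} R} {f g : TT R (ModuleCat.of R (ι →₀ R)) B →ₗ[R] C}
    (h : ∀ i, f ∘ₗ map (ModuleCat.ofHom (Finsupp.lsingle i)) (𝟙 B) =
      g ∘ₗ map (ModuleCat.ofHom (Finsupp.lsingle i)) (𝟙 B)) : f = g := by
  refine hom_ext fun x v b => ?_
  induction v using Finsupp.induction_linear with
  | zero => simp
  | add v w hv hw => rw [TensorProduct.tmul_add, TensorProduct.add_tmul, map_add, map_add,
      map_add, hv, hw]
  | single i r => exact LinearMap.congr_fun (h i) (mk ((x ⊗ₜ r) ⊗ₜ b))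

lemma hom_ext_finsupp_snd {A : ModuleCat.{u} R} {f g : TT R A (ModuleCat.of R (ι →₀ R)) →ₗ[R] C}
    (h : ∀ i, f ∘ₗ map (𝟙 A) (ModuleCat.ofHom (Finsupp.lsingle i)) =
      g ∘ₗ map (𝟙 A) (ModuleCat.ofHom (Finsupp.lsingle i))) : f = g := by
  refine hom_ext fun x a v => ?_
  induction v using Finsupp.induction_linear with
  | zero => simp
  | add v w hv hw => rw [TensorProduct.tmul_add, map_add, map_add, map_add, hv, hw]
  | single i r => exact LinearMap.congr_fun (h i) (mk ((x ⊗ₜ a) ⊗ₜ r))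

end Free

section Comparison

variable {R : Type u} [Ring R] [MonoidalCategory (ModuleCat.{u} R)]
  [MonoidalPreadditive (ModuleCat.{u} R)]

noncomputable def toTensorTrilinear (A B : ModuleCat.{u} R) :
    Lambda R →ₗ[R] A →ₗ[ℤ] B →ₗ[ℤ] ↥(A ⊗ B) where
  toFun x := AddMonoidHom.toIntLinearMap <| AddMonoidHom.mk'
    (fun a => AddMonoidHom.toIntLinearMap <| AddMonoidHom.mk'
      (fun b => (spanSingletonHom A a ⊗ₘ spanSingletonHom B b) x)
      fun b b' => by rw [spanSingletonHom_add, MonoidalPreadditive.tensor_add]; rfl)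
    fun a a' => by
      ext b
      change (spanSingletonHom A (a + a') ⊗ₘ spanSingletonHom B b) x =
        (spanSingletonHom A a ⊗ₘ spanSingletonHom B b) x +
          (spanSingletonHom A a' ⊗ₘ spanSingletonHom B b) x
      rw [spanSingletonHom_add, MonoidalPreadditive.add_tensor]; rfl
  map_add' x y := by
    ext a b; exact map_add (spanSingletonHom A a ⊗ₘ spanSingletonHom B b).hom x y
  map_smul' c x := by
    ext a b; exact map_smul (spanSingletonHom A a ⊗ₘ spanSingletonHom B b).hom c x

noncomputable def toTensor (A B : ModuleCat.{u} R) : TT R A B →ₗ[R] ↥(A ⊗ B) :=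
  (rel R A B).liftQ (TensorProduct.AlgebraTensorModule.lift
      (TensorProduct.AlgebraTensorModule.lift (toTensorTrilinear A B))) <| by
    refine Submodule.span_le.2 ?_
    rintro _ (⟨r, x, a, b, rfl⟩ | ⟨r, x, a, b, rfl⟩) <;>
      simp only [SetLike.mem_coe, LinearMap.mem_ker, map_sub, sub_eq_zero,
        TensorProduct.AlgebraTensorModule.lift_tmul]
    · exact tensorHom_apply_odot1 r x a b
    · exact tensorHom_apply_odot2 r x a b

variable {A B : ModuleCat.{u} R}

lemma toTensor_mk (x : Lambda R) (a : A) (b : B) :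
    toTensor A B (mk ((x ⊗ₜ a) ⊗ₜ b)) = (spanSingletonHom A a ⊗ₘ spanSingletonHom B b) x :=
  rfl

lemma toTensor_comp_map {A' B' : ModuleCat.{u} R} (f : A ⟶ A') (g : B ⟶ B') :
    toTensor A' B' ∘ₗ map f g = (f ⊗ₘ g).hom ∘ₗ toTensor A B :=
  hom_ext fun x a b => by
    simp only [LinearMap.comp_apply, map_mk_tmul, toTensor_mk, ← spanSingletonHom_comp,
      ← tensorHom_comp_tensorHom]
    rfl

end Comparison

section Isomorphism

variable {R : Type u} [Ring R] [MonoidalCategory (ModuleCat.{u} R)]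
  [MonoidalPreadditive (ModuleCat.{u} R)]

lemma toTensor_ring_bijective :
    Function.Bijective (toTensor (ModuleCat.of R R) (ModuleCat.of R R)) := by
  -- `ψ y = [y ⊗ 1 ⊗ 1]`
  let ψ : Lambda R →ₗ[R] TT R (ModuleCat.of R R) (ModuleCat.of R R) :=
    mk ∘ₗ (TensorProduct.AlgebraTensorModule.mk ℤ R _ (ModuleCat.of R R)).flip (1 : R) ∘ₗ
      (TensorProduct.AlgebraTensorModule.mk ℤ R _ (ModuleCat.of R R)).flip (1 : R)
  have hψ : ψ ∘ₗ toTensor _ _ = LinearMap.id := hom_ext fun x a b => by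
    rw [LinearMap.comp_apply, toTensor_mk, tensorHom_spanSingletonHom_self]
    change mk ((odot2 R b (odot1 R a x) ⊗ₜ (1 : R)) ⊗ₜ (1 : R)) = mk ((x ⊗ₜ a) ⊗ₜ b)
    rw [mk_odot2, mk_odot1, smul_eq_mul, mul_one, smul_eq_mul, mul_one]
  refine Function.bijective_iff_has_inverse.2 ⟨ψ, LinearMap.congr_fun hψ, fun y => ?_⟩
  change (spanSingletonHom _ 1 ⊗ₘ spanSingletonHom _ 1) y = y
  rw [spanSingletonHom_self, rho_one, id_tensorHom_id]
  rfl

noncomputable def toTensorFst (B : ModuleCat.{u} R) : functorFst R B ⟶ tensorRight B where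
  app A := ModuleCat.ofHom (toTensor A B)
  naturality _ _ f := ModuleCat.hom_ext <| (toTensor_comp_map f (𝟙 B)).trans <| by
    rw [tensorHom_id]; rfl

noncomputable def toTensorSnd (A : ModuleCat.{u} R) : functorSnd R A ⟶ tensorLeft A where
  app B := ModuleCat.ofHom (toTensor A B)
  naturality _ _ g := ModuleCat.hom_ext <| (toTensor_comp_map (𝟙 A) g).trans <| by
    rw [id_tensorHom]; rfl

variable [MonoidalClosed (ModuleCat.{u} R)]

lemma isIso_toTensorSnd_ring_app (B : ModuleCat.{u} R) :
    IsIso ((toTensorSnd (ModuleCat.of R R)).app B) :=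
  have : IsIso ((toTensorSnd (ModuleCat.of R R)).app (ModuleCat.of R R)) :=
    (ConcreteCategory.isIso_iff_bijective _).2 toTensor_ring_bijective
  NatTrans.isIso_app_of_isIso_app_ring _ (fun _ _ _ _ h => ModuleCat.hom_ext
    (hom_ext_finsupp_snd fun i => congrArg ModuleCat.Hom.hom (h i))) B

lemma isIso_toTensorFst_app [BraidedCategory (ModuleCat.{u} R)] (A B : ModuleCat.{u} R) :
    IsIso ((toTensorFst B).app A) :=
  have : IsIso ((toTensorFst B).app (ModuleCat.of R R)) := isIso_toTensorSnd_ring_app B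
  NatTrans.isIso_app_of_isIso_app_ring _ (fun _ _ _ _ h => ModuleCat.hom_ext
    (hom_ext_finsupp_fst fun i => congrArg ModuleCat.Hom.hom (h i))) A

lemma toTensor_bijective [BraidedCategory (ModuleCat.{u} R)] (A B : ModuleCat.{u} R) :
    Function.Bijective (toTensor A B) :=
  have := isIso_toTensorFst_app A B
  ConcreteCategory.bijective_of_isIso ((toTensorFst B).app A)

end Isomorphism

end TT

/-- Given an additive closed symmetric monoidal structure `∧` on left `R`-modules, the two
actions `x ⊙₁ r := (ρ_r ∧ 𝟙)(x)` and `x ⊙₂ r := (𝟙 ∧ ρ_r)(x)` define right `R`-module structures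
on `Λ := R ∧ R` which commute with each other and with the left `R`-action, and there is an
isomorphism of left `R`-modules `((Λ,⊙₁) ⊗[R] A, ⊙₂) ⊗[R] B ≅ A ∧ B`, natural in `A` and `B`. -/
theorem wedge_eq_tensor_lambda :
    -- `⊙₁` is a right `R`-module structure
    (∀ x, odot1 R 1 x = x) ∧
    (∀ (r s : R) (x), odot1 R s (odot1 R r x) = odot1 R (r * s) x) ∧
    (∀ (r : R) (x y), odot1 R r (x + y) = odot1 R r x + odot1 R r y) ∧
    (∀ (r s : R) (x), odot1 R (r + s) x = odot1 R r x + odot1 R s x) ∧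
    -- `⊙₂` is a right `R`-module structure
    (∀ x, odot2 R 1 x = x) ∧
    (∀ (r s : R) (x), odot2 R s (odot2 R r x) = odot2 R (r * s) x) ∧
    (∀ (r : R) (x y), odot2 R r (x + y) = odot2 R r x + odot2 R r y) ∧
    (∀ (r s : R) (x), odot2 R (r + s) x = odot2 R r x + odot2 R s x) ∧
    -- the two right actions commute with each other
    (∀ (r s : R) (x), odot1 R r (odot2 R s x) = odot2 R s (odot1 R r x)) ∧
    -- the two right actions commute with the left `R`-action
    (∀ (c r : R) (x), odot1 R r (c • x) = c • odot1 R r x) ∧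
    (∀ (c r : R) (x), odot2 R r (c • x) = c • odot2 R r x) ∧
    -- the natural isomorphism `((Λ,⊙₁) ⊗[R] A, ⊙₂) ⊗[R] B ≅ A ∧ B`
    ∃ e : ∀ A B : ModuleCat.{u} R, TT R A B ≃ₗ[R] ↥(A ⊗ B),
      ∀ {A A' B B' : ModuleCat.{u} R} (f : A ⟶ A') (g : B ⟶ B')
        (z : (↥(Lambda R) ⊗[ℤ] ↥A) ⊗[ℤ] ↥B),
        e A' B' (Submodule.Quotient.mk
            (TensorProduct.map (TensorProduct.map LinearMap.id (toIntHom R f)) (toIntHom R g) z)) =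
          (f ⊗ₘ g) (e A B (Submodule.Quotient.mk z)) :=
  ⟨odot1_one, odot1_odot1, odot1_add, add_odot1, odot2_one, odot2_odot2, odot2_add, add_odot2,
    odot1_odot2, odot1_smul, odot2_smul,
    fun A B => LinearEquiv.ofBijective _ (TT.toTensor_bijective A B),
    fun f g z => LinearMap.congr_fun (TT.toTensor_comp_map f g) (TT.mk z)⟩
end

section
/- Let R be a ring. If the category of left R-modules admits an additive closed symmetric monoidal structure whose unit object K is isomorphic to R as a left R-module, then R is commutative. -/
open CategoryTheory MonoidalCategory

universe u

/-- An additive closed symmetric monoidal structure on the category of left `R`-modules: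
a monoidal structure which is symmetric, closed, and additive (preadditive) in each variable. -/
structure AddClosedSymmMonStruct (R : Type u) [Ring R] : Type (u + 1) where
  mon : MonoidalCategory (ModuleCat.{u} R)
  symm : @SymmetricCategory (ModuleCat.{u} R) _ mon
  closed : @MonoidalClosed (ModuleCat.{u} R) _ mon
  preadd : @MonoidalPreadditive (ModuleCat.{u} R) _ _ mon

/-- The unit object of the structure. -/
def AddClosedSymmMonStruct.unit {R : Type u} [Ring R] (s : AddClosedSymmMonStruct R) :
    ModuleCat.{u} R :=
  letI := s.mon; 𝟙_ (ModuleCat.{u} R)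

/-- The monoidal product (the "wedge") of the structure. -/
def AddClosedSymmMonStruct.wedge {R : Type u} [Ring R] (s : AddClosedSymmMonStruct R)
    (A B : ModuleCat.{u} R) : ModuleCat.{u} R :=
  letI := s.mon; A ⊗ B

/-! Eckmann–Hilton: since `λ_ (𝟙_ C) = ρ_ (𝟙_ C)`, whiskering identifies `f ▷ 𝟙_ C` and
`𝟙_ C ◁ g` with conjugates of `f` and `g` by one and the same isomorphism, and whiskerings on
opposite sides always commute. The endomorphisms of the unit are then the opposite ring of `R`
transported along `𝟙_ ≅ R`, so `R` is commutative. -/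

theorem CategoryTheory.MonoidalCategory.unit_end_comm {C : Type*} [Category C]
    [MonoidalCategory C] (f g : 𝟙_ C ⟶ 𝟙_ C) : f ≫ g = g ≫ f := by
  have hf : f ▷ 𝟙_ C = (λ_ _).hom ≫ f ≫ (λ_ _).inv := by simp [unitors_equal, unitors_inv_equal]
  have hg : 𝟙_ C ◁ g = (λ_ _).hom ≫ g ≫ (λ_ _).inv := by simp
  simpa [hf, hg] using (whisker_exchange f g).symm

theorem mul_comm_of_end_comm {R M : Type*} [Semiring R] [AddCommMonoid M] [Module R M]
    (e : M ≃ₗ[R] R) (h : ∀ f g : Module.End R M, f * g = g * f) (a b : R) : a * b = b * a := by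
  let φ : Rᵐᵒᵖ ≃+* Module.End R M := (RingEquiv.moduleEndSelf R).trans e.conjRingEquiv.symm
  apply MulOpposite.op_injective
  apply φ.injective
  simp only [MulOpposite.op_mul, map_mul, h]

/-- If the category of left `R`-modules admits an additive closed symmetric monoidal structure
whose unit object is isomorphic to `R` as a left `R`-module, then `R` is commutative. -/
theorem commutative_of_unit_iso_self (R : Type u) [Ring R] (s : AddClosedSymmMonStruct R)
    (e : Nonempty (↥(s.unit) ≃ₗ[R] R)) : ∀ a b : R, a * b = b * a := by
  let := s.mon
  obtain ⟨e⟩ := e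
  refine mul_comm_of_end_comm e fun f g => ?_
  exact congrArg ModuleCat.Hom.hom (unit_end_comm (ModuleCat.ofHom g) (ModuleCat.ofHom f))
end

section
/- Let k be a division ring that is not commutative (not a field). Then there exists no additive closed symmetric monoidal structure on the category of left k-modules: there is no monoidal category structure on ModuleCat k that is simultaneously symmetric, monoidal closed, and additive in each variable. -/
open CategoryTheory MonoidalCategory

universe u

/-! By the Eckmann–Hilton argument, composition of endomorphisms of the unit object of any monoidal
category is commutative. The unit `K` of such a structure on `k`-modules cannot be zero, since
additivity of `X ∧ −` would make every `X ≅ X ∧ K` zero. A nonzero vector `v` of `K` together with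
a functional `f` normalised by `f v = 1` gives the endomorphisms `x ↦ f x • a • v`, and these
commute only if `k` is commutative. -/

open Limits

namespace CategoryTheory.MonoidalCategory

variable {C : Type*} [Category C] [MonoidalCategory C]

theorem tensorUnit_endomorphisms_commute (f g : 𝟙_ C ⟶ 𝟙_ C) : f ≫ g = g ≫ f := by
  let star : (𝟙_ C ⟶ 𝟙_ C) → (𝟙_ C ⟶ 𝟙_ C) → (𝟙_ C ⟶ 𝟙_ C) :=
    fun a b => (λ_ (𝟙_ C)).inv ≫ (a ⊗ₘ b) ≫ (λ_ (𝟙_ C)).hom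
  have star_unital : EckmannHilton.IsUnital star (𝟙 _) :=
    { left_id := fun b => by simp [star]
      right_id := fun a => by simp [star, unitors_equal, unitors_inv_equal] }
  have comp_unital : EckmannHilton.IsUnital (fun a b : 𝟙_ C ⟶ 𝟙_ C => a ≫ b) (𝟙 _) :=
    { left_id := Category.id_comp
      right_id := Category.comp_id }
  have interchange (a b c d : 𝟙_ C ⟶ 𝟙_ C) : star (a ≫ b) (c ≫ d) = star a c ≫ star b d := by
    simp [star]
  exact (EckmannHilton.mul_comm star_unital comp_unital interchange).comm f g

theorem isZero_of_isZero_tensorUnit [Preadditive C] [MonoidalPreadditive C]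
    (h : IsZero (𝟙_ C)) (X : C) : IsZero X := by
  refine IsZero.of_iso ?_ (ρ_ X).symm
  rw [IsZero.iff_id_eq_zero, ← whiskerLeft_id, h.eq_zero_of_src (𝟙 _),
    MonoidalPreadditive.whiskerLeft_zero]

end CategoryTheory.MonoidalCategory

namespace Module

theorem mul_comm_of_end_comm_of_apply_eq_one {R M : Type*} [Semiring R] [AddCommMonoid M]
    [Module R M] (hcomm : ∀ φ ψ : End R M, φ * ψ = ψ * φ) {v : M} {f : M →ₗ[R] R}
    (hfv : f v = 1) (a b : R) : a * b = b * a := by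
  have key := congrArg (fun φ : End R M => f (φ v))
    (hcomm (f.smulRight (a • v)) (f.smulRight (b • v)))
  simpa [hfv, smul_smul] using key.symm

theorem mul_comm_of_end_comm {k V : Type*} [DivisionRing k] [AddCommGroup V] [Module k V]
    [Nontrivial V] (hcomm : ∀ φ ψ : End k V, φ * ψ = ψ * φ) (a b : k) :
    a * b = b * a := by
  obtain ⟨v, hv⟩ := exists_ne (0 : V)
  obtain ⟨f, hf⟩ := Projective.exists_dual_ne_zero k hv
  exact mul_comm_of_end_comm_of_apply_eq_one hcomm (v := v)
    (f := LinearMap.toSpanSingleton k k (f v)⁻¹ ∘ₗ f) (by simp [hf]) a b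

end Module

/-- If `k` is a division ring which is not commutative (not a field), then there is no
additive closed symmetric monoidal structure on the category of left `k`-modules. -/
theorem no_structure_of_noncommutative_divisionRing (k : Type u) [DivisionRing k]
    (h : ¬ ∀ a b : k, a * b = b * a) : IsEmpty (AddClosedSymmMonStruct k) := by
  refine ⟨fun s => h ?_⟩
  let _ := s.mon
  let _ := s.preadd
  have : Nontrivial (𝟙_ (ModuleCat.{u} k)) := by
    rw [← not_subsingleton_iff_nontrivial, ← ModuleCat.isZero_iff_subsingleton]
    intro hunit
    exact not_subsingleton k
      (ModuleCat.isZero_of_iff_subsingleton.mp (isZero_of_isZero_tensorUnit hunit _))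
  exact Module.mul_comm_of_end_comm (V := 𝟙_ (ModuleCat.{u} k)) fun φ ψ =>
    congrArg ModuleCat.Hom.hom
      (tensorUnit_endomorphisms_commute (ModuleCat.ofHom ψ) (ModuleCat.ofHom φ))
end

section
/- Let k be a field of characteristic 2 and R = k[X]/(X²), with x the image of X. (i) For every k-bialgebra structure on R (with its given k-algebra structure), the counit satisfies ε(x) = 0 and there exists a ∈ k such that the comultiplication satisfies Δ(x) = 1 ⊗ x + x ⊗ 1 + a·(x ⊗ x); every such a does define a k-bialgebra structure, which is cocommutative. (ii) The bialgebra structures corresponding to parameters a and b are isomorphic as k-bialgebras if and only if (a = 0 ↔ b = 0); consequently there are exactly two isomorphism classes of k-Hopf algebra structures on R, represented by a = 0 and a = 1. -/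
open scoped TensorProduct

universe u

/-- A `k`-bialgebra structure on a `k`-algebra `A`: `k`-algebra maps
`Δ : A →ₐ[k] A ⊗[k] A` and `ε : A →ₐ[k] k` satisfying coassociativity and counitality. -/
structure BialgebraData (k : Type u) [CommSemiring k] (A : Type u) [Semiring A]
    [Algebra k A] where
  comul : A →ₐ[k] A ⊗[k] A
  counit : A →ₐ[k] k
  coassoc : ∀ y : A,
    TensorProduct.assoc k A A A
        (TensorProduct.map comul.toLinearMap LinearMap.id (comul y)) =
      TensorProduct.map LinearMap.id comul.toLinearMap (comul y)
  counit_left : ∀ y : A,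
    TensorProduct.lid k A (TensorProduct.map counit.toLinearMap LinearMap.id (comul y)) = y
  counit_right : ∀ y : A,
    TensorProduct.rid k A (TensorProduct.map LinearMap.id counit.toLinearMap (comul y)) = y

/-- Two bialgebra structures on `A` are isomorphic if there is a `k`-algebra automorphism
of `A` compatible with the counits and comultiplications. -/
def BialgebraData.Isomorphic {k : Type u} [CommSemiring k] {A : Type u} [Semiring A]
    [Algebra k A] (Ba Bb : BialgebraData k A) : Prop :=
  ∃ φ : A ≃ₐ[k] A,
    (∀ y : A, Bb.counit (φ y) = Ba.counit y) ∧
    (∀ y : A, Bb.comul (φ y) = TensorProduct.map φ.toLinearMap φ.toLinearMap (Ba.comul y))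

/-- The ring `k[X]/(X²)`. -/
abbrev DualNumbersQuot (k : Type) [Field k] : Type :=
  Polynomial k ⧸ Ideal.span {(Polynomial.X : Polynomial k) ^ 2}

/-- The image `x` of `X` in `k[X]/(X²)`. -/
noncomputable abbrev DualNumbersQuot.x (k : Type) [Field k] : DualNumbersQuot k :=
  Ideal.Quotient.mk _ Polynomial.X

/-!
An algebra map to a field kills the square-zero element `x`, so `ε x = 0`. Writing
`Δ x = 1 ⊗ u + x ⊗ v`, the two counit laws force `u = x` and `v = 1 + a x`. Conversely, in
characteristic `2` the element `1 ⊗ x + x ⊗ 1 + a (x ⊗ x)` squares to zero, so `x` may be sent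
to it by an algebra map, and the coalgebra axioms, being linear, need only be checked on `1`
and `x`. An algebra automorphism of `R` has the form `x ↦ c x` with `c ≠ 0` and turns the
parameter `a` into `a c`; hence `a` and `b` give isomorphic structures exactly when both are
zero or both are nonzero.
-/

open Polynomial TensorProduct

theorem TensorProduct.tmul_ne_zero {k V W : Type*} [Field k] [AddCommGroup V]
    [Module k V] [AddCommGroup W] [Module k W] {v : V} {w : W} (hv : v ≠ 0) (hw : w ≠ 0) :
    v ⊗ₜ[k] w ≠ 0 := by
  obtain ⟨f, hf⟩ := Module.Projective.exists_dual_eq_one k hv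
  obtain ⟨g, hg⟩ := Module.Projective.exists_dual_eq_one k hw
  intro h
  simpa [hf, hg] using congrArg (TensorProduct.lid k k ∘ TensorProduct.map f g) h

section ParamComul

variable {k A : Type*} [Field k] [CommRing A] [Algebra k A]

def paramComul (x : A) (a : k) : A ⊗[k] A := 1 ⊗ₜ x + x ⊗ₜ 1 + a • (x ⊗ₜ x)

theorem paramComul_mul_self (h2 : (2 : k) = 0) {x : A} (hx : x * x = 0) (a : k) :
    paramComul x a * paramComul x a = 0 := by
  have h2' : (2 : A ⊗[k] A) = 0 := by
    rw [← map_ofNat (algebraMap k (A ⊗[k] A)) 2, h2, map_zero]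
  have hu : (1 ⊗ₜ x : A ⊗[k] A) * (1 ⊗ₜ x) = 0 := by
    rw [Algebra.TensorProduct.tmul_mul_tmul, hx, tmul_zero]
  have hv : (x ⊗ₜ 1 : A ⊗[k] A) * (x ⊗ₜ 1) = 0 := by
    rw [Algebra.TensorProduct.tmul_mul_tmul, hx, zero_tmul]
  have hm : (x ⊗ₜ x : A ⊗[k] A) * (x ⊗ₜ x) = 0 := by
    rw [Algebra.TensorProduct.tmul_mul_tmul, hx, zero_tmul]
  set a' := algebraMap k (A ⊗[k] A) a
  rw [paramComul, Algebra.smul_def]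
  -- in characteristic 2 the square of a sum is the sum of the squares
  linear_combination (1 ⊗ₜ x * x ⊗ₜ 1 + a' * (1 ⊗ₜ x) * (x ⊗ₜ x)
    + a' * (x ⊗ₜ 1) * (x ⊗ₜ x)) * h2' + hu + hv + a' ^ 2 * hm

end ParamComul

structure IsDualGenerator (k : Type*) [Field k] {A : Type*} [Ring A] [Algebra k A] (x : A) :
    Prop where
  mul_self : x * x = 0
  ne_zero : x ≠ 0
  exists_eq : ∀ y : A, ∃ c₀ c₁ : k, y = c₀ • 1 + c₁ • x

namespace IsDualGenerator

section

variable {k A : Type*} [Field k] [CommRing A] [Algebra k A] {x : A} (hx : IsDualGenerator k x)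
include hx

theorem linearMap_ext {M : Type*} [AddCommMonoid M] [Module k M] {f g : A →ₗ[k] M}
    (h₁ : f 1 = g 1) (hx' : f x = g x) : f = g :=
  LinearMap.ext fun y => by
    obtain ⟨c₀, c₁, rfl⟩ := hx.exists_eq y
    simp [h₁, hx']

theorem algHom_ext {S : Type*} [Semiring S] [Algebra k S] {f g : A →ₐ[k] S}
    (h : f x = g x) : f = g :=
  AlgHom.toLinearMap_injective (hx.linearMap_ext (by simp) h)

theorem algHom_apply_eq_zero (f : A →ₐ[k] k) : f x = 0 :=
  mul_self_eq_zero.mp (by rw [← map_mul, hx.mul_self, map_zero])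

theorem exists_eq_one_tmul_add_tmul (t : A ⊗[k] A) : ∃ u v : A, t = 1 ⊗ₜ u + x ⊗ₜ v := by
  induction t using TensorProduct.induction_on with
  | zero => exact ⟨0, 0, by simp⟩
  | tmul y z =>
    obtain ⟨c₀, c₁, rfl⟩ := hx.exists_eq y
    exact ⟨c₀ • z, c₁ • z, by simp only [add_tmul, smul_tmul]⟩
  | add t t' ht ht' =>
    obtain ⟨u, v, rfl⟩ := ht
    obtain ⟨u', v', rfl⟩ := ht'
    exact ⟨u + u', v + v', by simp only [tmul_add]; abel⟩

theorem exists_apply_eq_smul (ε : A →ₐ[k] k) (φ : A ≃ₐ[k] A) :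
    ∃ c ≠ (0 : k), φ x = c • x := by
  obtain ⟨c₀, c₁, hφ⟩ := hx.exists_eq (φ x)
  have hc₀ : c₀ = 0 := by
    have h : ε (φ x) = 0 := hx.algHom_apply_eq_zero (ε.comp φ.toAlgHom)
    simpa [hφ, hx.algHom_apply_eq_zero ε] using h
  rw [hc₀, zero_smul, zero_add] at hφ
  refine ⟨c₁, fun hc₁ => hx.ne_zero (φ.injective ?_), hφ⟩
  rw [hφ, hc₁, zero_smul, map_zero]

end

variable {k A : Type u} [Field k] [CommRing A] [Algebra k A] {x : A} (hx : IsDualGenerator k x)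
include hx

def toBialgebraData (Δ : A →ₐ[k] A ⊗[k] A) (ε : A →ₐ[k] k) {a : k}
    (hΔ : Δ x = paramComul x a) (hε : ε x = 0) : BialgebraData k A where
  comul := Δ
  counit := ε
  coassoc y := by
    refine LinearMap.congr_fun (hx.linearMap_ext
      (f := (TensorProduct.assoc k A A A).toLinearMap ∘ₗ
        TensorProduct.map Δ.toLinearMap LinearMap.id ∘ₗ Δ.toLinearMap)
      (g := TensorProduct.map LinearMap.id Δ.toLinearMap ∘ₗ Δ.toLinearMap) ?_ ?_) y
    · simp [Algebra.TensorProduct.one_def]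
    · simp only [LinearMap.coe_comp, LinearEquiv.coe_coe, AlgHom.coe_toLinearMap,
        Function.comp_apply, hΔ, paramComul, map_add, map_tmul, AlgHom.toLinearMap_apply, map_one,
        Algebra.TensorProduct.one_def, LinearMap.id_coe, id_eq, add_tmul, ← smul_tmul', map_smul,
        smul_add, assoc_tmul, tmul_add, tmul_smul]
      module
  counit_left y := by
    refine LinearMap.congr_fun (hx.linearMap_ext
      (f := (TensorProduct.lid k A).toLinearMap ∘ₗ
        TensorProduct.map ε.toLinearMap LinearMap.id ∘ₗ Δ.toLinearMap)
      (g := LinearMap.id) ?_ ?_) y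
    · simp [Algebra.TensorProduct.one_def]
    · simp [hΔ, hε, paramComul]
  counit_right y := by
    refine LinearMap.congr_fun (hx.linearMap_ext
      (f := (TensorProduct.rid k A).toLinearMap ∘ₗ
        TensorProduct.map LinearMap.id ε.toLinearMap ∘ₗ Δ.toLinearMap)
      (g := LinearMap.id) ?_ ?_) y
    · simp [Algebra.TensorProduct.one_def]
    · simp [hΔ, hε, paramComul]

theorem comm_comul {B : BialgebraData k A} {a : k} (ha : B.comul x = paramComul x a) (y : A) :
    TensorProduct.comm k A A (B.comul y) = B.comul y := by
  refine LinearMap.congr_fun (hx.linearMap_ext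
    (f := (TensorProduct.comm k A A).toLinearMap ∘ₗ B.comul.toLinearMap)
    (g := B.comul.toLinearMap) ?_ ?_) y
  · simp [Algebra.TensorProduct.one_def]
  · simp only [LinearMap.coe_comp, LinearEquiv.coe_coe, AlgHom.coe_toLinearMap,
      Function.comp_apply, ha, paramComul, map_add, comm_tmul, map_smul, add_left_inj]
    abel

theorem exists_comul_eq (B : BialgebraData k A) : ∃ a : k, B.comul x = paramComul x a := by
  have hε := hx.algHom_apply_eq_zero B.counit
  obtain ⟨u, v, huv⟩ := hx.exists_eq_one_tmul_add_tmul (B.comul x)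
  have hu : u = x := by simpa [huv, hε] using B.counit_left x
  have hv : B.counit v = 1 := by
    have := B.counit_right x
    simp only [huv, hu, map_add, TensorProduct.map_tmul, AlgHom.toLinearMap_apply,
      LinearMap.id_coe, id_eq, rid_tmul, hε, zero_smul, zero_add] at this
    exact smul_left_injective k hx.ne_zero (this.trans (one_smul k x).symm)
  obtain ⟨c₀, c₁, rfl⟩ := hx.exists_eq v
  have hc₀ : c₀ = 1 := by simpa [hε] using hv
  refine ⟨c₁, ?_⟩
  rw [huv, hu, hc₀, paramComul, one_smul, tmul_add, tmul_smul]
  abel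

theorem isomorphic_of_apply_eq_smul {Ba Bb : BialgebraData k A} {a b c : k}
    (ha : Ba.comul x = paramComul x a) (hb : Bb.comul x = paramComul x b)
    (φ : A ≃ₐ[k] A) (hφ : φ x = c • x) (hbac : b = a * c) : Ba.Isomorphic Bb := by
  refine ⟨φ, fun y => ?_, fun y => ?_⟩
  · have hε : Bb.counit.comp φ.toAlgHom = Ba.counit :=
      hx.algHom_ext (by simp [hx.algHom_apply_eq_zero])
    exact AlgHom.congr_fun hε y
  · refine AlgHom.congr_fun (hx.algHom_ext (f := Bb.comul.comp φ.toAlgHom)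
      (g := (Algebra.TensorProduct.map φ.toAlgHom φ.toAlgHom).comp Ba.comul) ?_) y
    simp only [AlgHom.coe_comp, AlgEquiv.coe_toAlgHom, Function.comp_apply, hφ, map_smul, hb,
      paramComul, hbac, smul_add, smul_smul, ha, map_add, Algebra.TensorProduct.map_tmul, map_one,
      tmul_smul, ← smul_tmul', add_right_inj]
    module

theorem exists_eq_mul_of_isomorphic {Ba Bb : BialgebraData k A} {a b : k}
    (ha : Ba.comul x = paramComul x a) (hb : Bb.comul x = paramComul x b)
    (h : Ba.Isomorphic Bb) : ∃ c ≠ (0 : k), b = a * c := by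
  obtain ⟨φ, -, hcomul⟩ := h
  obtain ⟨c, hc, hφ⟩ := hx.exists_apply_eq_smul Ba.counit φ
  have key := hcomul x
  simp only [hφ, map_smul, ha, hb, paramComul, map_add, TensorProduct.map_tmul,
    AlgEquiv.toLinearMap_apply, map_one, tmul_smul, ← smul_tmul', smul_add, smul_smul] at key
  have hcoeff : (c * b) • (x ⊗ₜ[k] x) = (a * c * c) • (x ⊗ₜ[k] x) := by
    linear_combination (norm := module) key
  have := smul_left_injective k (TensorProduct.tmul_ne_zero hx.ne_zero hx.ne_zero) hcoeff
  exact ⟨c, hc, mul_left_cancel₀ hc (by linear_combination this)⟩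

end IsDualGenerator

namespace DualNumbersQuot

variable {k : Type} [Field k]

local notation "R" => DualNumbersQuot k

variable (k) in
theorem x_mul_self : x k * x k = 0 := by
  rw [← sq, ← map_pow]
  exact Ideal.Quotient.eq_zero_iff_mem.2 (Ideal.subset_span rfl)

variable (k) in
noncomputable def powerBasis : PowerBasis k R :=
  AdjoinRoot.powerBasis (pow_ne_zero 2 X_ne_zero)

variable (k) in
theorem powerBasis_dim : (powerBasis k).dim = 2 := natDegree_X_pow 2

variable (k) in
noncomputable def basis : Module.Basis (Fin 2) k R :=
  (powerBasis k).basis.reindex (finCongr (powerBasis_dim k))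

theorem basis_apply (i : Fin 2) : basis k i = x k ^ (i : ℕ) := by
  rw [basis, Module.Basis.reindex_apply, PowerBasis.coe_basis]
  rfl

variable (k) in
theorem isDualGenerator : IsDualGenerator k (x k) where
  mul_self := x_mul_self k
  ne_zero := by simpa [basis_apply] using (basis k).ne_zero 1
  exists_eq y := by
    refine ⟨(basis k).repr y 0, (basis k).repr y 1, ?_⟩
    conv_lhs => rw [← (basis k).sum_repr y]
    simp [Fin.sum_univ_two, basis_apply]

section lift

variable {S : Type} [CommRing S] [Algebra k S]

noncomputable def lift (s : S) (hs : s * s = 0) : R →ₐ[k] S :=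
  AdjoinRoot.liftAlgHom _ (Algebra.ofId k S) s (by rw [eval₂_pow, eval₂_X, sq, hs])

@[simp]
theorem lift_x (s : S) (hs : s * s = 0) : lift s hs (x k) = s :=
  AdjoinRoot.liftAlgHom_root _ _ s _

end lift

variable (k) in
noncomputable def augmentation : R →ₐ[k] k := lift 0 (mul_zero 0)

theorem smul_x_mul_smul_x (c : k) : (c • x k) * (c • x k) = 0 := by
  rw [smul_mul_smul_comm, x_mul_self, smul_zero]

noncomputable def scaleEquiv (c : k) (hc : c ≠ 0) : R ≃ₐ[k] R :=
  AlgEquiv.ofAlgHom (lift _ (smul_x_mul_smul_x c)) (lift _ (smul_x_mul_smul_x c⁻¹))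
    ((isDualGenerator k).algHom_ext (by simp [smul_smul, hc]))
    ((isDualGenerator k).algHom_ext (by simp [smul_smul, hc]))

theorem scaleEquiv_x (c : k) (hc : c ≠ 0) : scaleEquiv c hc (x k) = c • x k :=
  lift_x _ (smul_x_mul_smul_x c)

noncomputable def bialgebraData (h2 : (2 : k) = 0) (a : k) : BialgebraData k R :=
  (isDualGenerator k).toBialgebraData (lift _ (paramComul_mul_self h2 (x_mul_self k) a))
    (augmentation k) (lift_x _ _) (lift_x _ _)

theorem bialgebraData_comul_x (h2 : (2 : k) = 0) (a : k) :
    (bialgebraData h2 a).comul (x k) = paramComul (x k) a :=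
  lift_x _ _

theorem isomorphic_iff {Ba Bb : BialgebraData k R} {a b : k}
    (ha : Ba.comul (x k) = paramComul (x k) a) (hb : Bb.comul (x k) = paramComul (x k) b) :
    Ba.Isomorphic Bb ↔ (a = 0 ↔ b = 0) := by
  refine ⟨fun h => ?_, fun hab => ?_⟩
  · obtain ⟨c, hc, rfl⟩ := (isDualGenerator k).exists_eq_mul_of_isomorphic ha hb h
    simp [hc]
  · by_cases ha0 : a = 0
    · exact (isDualGenerator k).isomorphic_of_apply_eq_smul ha hb (scaleEquiv 1 one_ne_zero)
        (scaleEquiv_x 1 one_ne_zero) (by simp [ha0, hab.mp ha0])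
    · have hc : a⁻¹ * b ≠ 0 := mul_ne_zero (inv_ne_zero ha0) (mt hab.mpr ha0)
      exact (isDualGenerator k).isomorphic_of_apply_eq_smul ha hb (scaleEquiv _ hc)
        (scaleEquiv_x _ hc) (by field_simp)

end DualNumbersQuot

set_option synthInstance.maxHeartbeats 1000000 in
set_option maxHeartbeats 4000000 in
/-- Over a field `k` of characteristic `2` and `R = k[X]/(X²)`:  every `k`-bialgebra structure on
`R` has `ε(x) = 0` and `Δ(x) = 1 ⊗ x + x ⊗ 1 + a • (x ⊗ x)` for some `a : k`; every `a : k`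
arises from such a (cocommutative) bialgebra structure; two such structures with parameters `a`
and `b` are isomorphic iff `(a = 0 ↔ b = 0)`; and consequently there are exactly two isomorphism
classes, represented by `a = 0` and `a = 1`. -/
theorem bialgebra_structures_on_dualNumbers (k : Type) [Field k] (h2 : (2 : k) = 0) :
    (∀ B : BialgebraData k (DualNumbersQuot k),
        B.counit (DualNumbersQuot.x k) = 0 ∧
        ∃ a : k, B.comul (DualNumbersQuot.x k) =
          (1 : DualNumbersQuot k) ⊗ₜ[k] DualNumbersQuot.x k +
            DualNumbersQuot.x k ⊗ₜ[k] (1 : DualNumbersQuot k) +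
            a • (DualNumbersQuot.x k ⊗ₜ[k] DualNumbersQuot.x k)) ∧
    (∀ a : k, ∃ B : BialgebraData k (DualNumbersQuot k),
        B.comul (DualNumbersQuot.x k) =
          (1 : DualNumbersQuot k) ⊗ₜ[k] DualNumbersQuot.x k +
            DualNumbersQuot.x k ⊗ₜ[k] (1 : DualNumbersQuot k) +
            a • (DualNumbersQuot.x k ⊗ₜ[k] DualNumbersQuot.x k) ∧
        ∀ y, TensorProduct.comm k (DualNumbersQuot k) (DualNumbersQuot k) (B.comul y) =
          B.comul y) ∧
    (∀ (a b : k) (Ba Bb : BialgebraData k (DualNumbersQuot k)),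
        Ba.comul (DualNumbersQuot.x k) =
          (1 : DualNumbersQuot k) ⊗ₜ[k] DualNumbersQuot.x k +
            DualNumbersQuot.x k ⊗ₜ[k] (1 : DualNumbersQuot k) +
            a • (DualNumbersQuot.x k ⊗ₜ[k] DualNumbersQuot.x k) →
        Bb.comul (DualNumbersQuot.x k) =
          (1 : DualNumbersQuot k) ⊗ₜ[k] DualNumbersQuot.x k +
            DualNumbersQuot.x k ⊗ₜ[k] (1 : DualNumbersQuot k) +
            b • (DualNumbersQuot.x k ⊗ₜ[k] DualNumbersQuot.x k) →
        (Ba.Isomorphic Bb ↔ (a = 0 ↔ b = 0))) ∧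
    (∃ B0 B1 : BialgebraData k (DualNumbersQuot k),
        B0.comul (DualNumbersQuot.x k) =
          (1 : DualNumbersQuot k) ⊗ₜ[k] DualNumbersQuot.x k +
            DualNumbersQuot.x k ⊗ₜ[k] (1 : DualNumbersQuot k) ∧
        B1.comul (DualNumbersQuot.x k) =
          (1 : DualNumbersQuot k) ⊗ₜ[k] DualNumbersQuot.x k +
            DualNumbersQuot.x k ⊗ₜ[k] (1 : DualNumbersQuot k) +
            DualNumbersQuot.x k ⊗ₜ[k] DualNumbersQuot.x k ∧
        ¬ B0.Isomorphic B1 ∧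
        ∀ B : BialgebraData k (DualNumbersQuot k), B.Isomorphic B0 ∨ B.Isomorphic B1) := by
  have hx := DualNumbersQuot.isDualGenerator k
  have hB := DualNumbersQuot.bialgebraData_comul_x h2
  refine ⟨fun B => ⟨hx.algHom_apply_eq_zero B.counit, hx.exists_comul_eq B⟩,
    fun a => ⟨_, hB a, hx.comm_comul (hB a)⟩,
    fun a b Ba Bb => DualNumbersQuot.isomorphic_iff, _, _,
    by simpa [paramComul] using hB 0, by simpa [paramComul] using hB 1,
    by simp [DualNumbersQuot.isomorphic_iff (hB 0) (hB 1)], fun B => ?_⟩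
  obtain ⟨a, ha⟩ := hx.exists_comul_eq B
  by_cases ha0 : a = 0
  · exact Or.inl ((DualNumbersQuot.isomorphic_iff ha (hB 0)).mpr (by simp [ha0]))
  · exact Or.inr ((DualNumbersQuot.isomorphic_iff ha (hB 1)).mpr (by simp [ha0]))
end

section
/- Let R be a ring with an additive closed symmetric monoidal structure ∧ on the category of left R-modules. For any morphism g : A → B of left R-modules, consider the morphism 𝟙_R ∧ g : R ∧ A → R ∧ B. Then: (i) 𝟙_R ∧ g = 0 if and only if g = 0; (ii) 𝟙_R ∧ g is an isomorphism if and only if g is an isomorphism; (iii) 𝟙_R ∧ g is an epimorphism (equivalently, surjective) if and only if g is. In particular, the functor R ∧ − on ModuleCat R is faithful and conservative. -/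
open CategoryTheory MonoidalCategory

universe u

/-- The left whiskering `𝟙_R ∧ g : R ∧ A ⟶ R ∧ B` of a morphism `g : A ⟶ B`. -/
def AddClosedSymmMonStruct.whiskL {R : Type u} [Ring R] (s : AddClosedSymmMonStruct R)
    (A : ModuleCat.{u} R) {B C : ModuleCat.{u} R} (g : B ⟶ C) : s.wedge A B ⟶ s.wedge A C :=
  letI := s.mon; A ◁ g

/-- The functor `R ∧ -` on `ModuleCat R`. -/
def AddClosedSymmMonStruct.tensorLeftR {R : Type u} [Ring R] (s : AddClosedSymmMonStruct R) :
    ModuleCat.{u} R ⥤ ModuleCat.{u} R :=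
  letI := s.mon; tensorLeft (ModuleCat.of R R)

/-!
Since `∧` is symmetric, `R ∧ g` determines `g ∧ R`, the component at `R` of the natural
transformation `g ∧ - : A ∧ - ⟶ B ∧ -`. Both functors are left adjoints, hence preserve
coproducts and epimorphisms, and every module is a quotient of a direct sum of copies of `R`;
so this component determines the whole transformation, and with it `g ∧ K`, which is `g` up
to the unitors.
Hence `R ∧ -` is faithful. Being additive, it then reflects zero morphisms, and on the balanced
category `ModuleCat R` a faithful functor reflects epimorphisms, monomorphisms and isomorphisms.
-/

open Limits

namespace CategoryTheory

universe v

theorem NatTrans.ext_of_isSeparator {C D : Type*} [Category.{v} C] [Category D]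
    [HasCoproducts.{v} C] {G : C} (hG : IsSeparator G) {F F' : C ⥤ D} [F.IsLeftAdjoint]
    {α β : F ⟶ F'} (h : α.app G = β.app G) : α = β := by
  ext Y
  let p : (∐ fun _ : G ⟶ Y => G) ⟶ Y := Limits.Sigma.desc fun f => f
  have : Epi p := (isSeparator_iff_epi G).1 hG Y
  rw [← cancel_epi (F.map p), α.naturality, β.naturality]
  congr 1
  refine (isColimitOfPreserves F (colimit.isColimit _)).hom_ext fun ⟨f⟩ => ?_
  exact (α.naturality _).trans ((congrArg (· ≫ _) h).trans (β.naturality _).symm)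

theorem MonoidalCategory.tensorLeft_faithful_of_isSeparator {C : Type*} [Category.{v} C]
    [MonoidalCategory C] [BraidedCategory C] [MonoidalClosed C] [HasCoproducts.{v} C] {G : C}
    (hG : IsSeparator G) : (tensorLeft G).Faithful where
  map_injective {A B} f f' h := by
    have hRight : f ▷ G = f' ▷ G := by
      rw [← cancel_mono (β_ B G).hom, BraidedCategory.braiding_naturality_left,
        BraidedCategory.braiding_naturality_left]
      exact congrArg _ h
    have hNat : (tensoringLeft C).map f = (tensoringLeft C).map f' :=
      NatTrans.ext_of_isSeparator hG hRight
    simpa using NatTrans.congr_app hNat (𝟙_ C)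

end CategoryTheory

theorem ModuleCat.isSeparator_self (R : Type u) [Ring R] : IsSeparator (ModuleCat.of R R) :=
  (isSeparator_def _).2 fun X _ f g h => by
    ext x
    simpa using
      congrArg (fun φ => φ.hom 1) (h (ModuleCat.ofHom (LinearMap.toSpanSingleton R X x)))

/-- For any additive closed symmetric monoidal structure `∧` on left `R`-modules and any
morphism `g : A ⟶ B`, the morphism `𝟙_R ∧ g : R ∧ A ⟶ R ∧ B` is zero (resp. an isomorphism,
resp. an epimorphism, equivalently surjective) if and only if `g` is.  In particular the
functor `R ∧ -` is faithful and conservative. -/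
theorem whiskerLeft_reflects (R : Type u) [Ring R] (s : AddClosedSymmMonStruct R) :
    (∀ (A B : ModuleCat.{u} R) (g : A ⟶ B),
        (s.whiskL (ModuleCat.of R R) g = 0 ↔ g = 0) ∧
        (IsIso (s.whiskL (ModuleCat.of R R) g) ↔ IsIso g) ∧
        (Epi (s.whiskL (ModuleCat.of R R) g) ↔ Epi g) ∧
        (Function.Surjective (s.whiskL (ModuleCat.of R R) g) ↔ Function.Surjective g)) ∧
      s.tensorLeftR.Faithful ∧ s.tensorLeftR.ReflectsIsomorphisms := by
  let _ := s.mon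
  let _ := s.symm
  let _ := s.closed
  let _ := s.preadd
  let F := tensorLeft (ModuleCat.of R R)
  have : F.Faithful := tensorLeft_faithful_of_isSeparator (ModuleCat.isSeparator_self R)
  refine ⟨fun A B g =>
    ⟨F.map_eq_zero_iff, isIso_iff_of_reflects_iso g F, F.epi_map_iff_epi g, ?_⟩,
    this, inferInstanceAs F.ReflectsIsomorphisms⟩
  rw [← ModuleCat.epi_iff_surjective, ← ModuleCat.epi_iff_surjective]
  exact F.epi_map_iff_epi g
end

section
/- Let R be a ring with an additive closed symmetric monoidal structure ∧ on the category of left R-modules. Then the left R-module R ∧ R is faithful: if r ∈ R satisfies r • x = 0 for every element x of the R-module R ∧ R, then r = 0. -/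
/-! Tensoring with `R` is a left adjoint, so it preserves coproducts and epimorphisms. Every
module `M` is a quotient of a direct sum of copies of `R`, hence `R ∧ M` is a quotient of a direct
sum of copies of `R ∧ R` and is killed by everything that kills `R ∧ R`. For `M` the unit `K` this
gives `R ∧ K ≅ R`, which is faithful. -/

open CategoryTheory MonoidalCategory

universe u

open Limits

namespace ModuleCat

variable {R : Type u} [Ring R]

theorem annihilator_sigma {ι : Type u} (Z : ι → ModuleCat.{u} R) :
    Module.annihilator R ↑(∐ Z : ModuleCat.{u} R) = ⨅ i, Module.annihilator R (Z i) := by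
  classical
  exact (coprodIsoDirectSum Z).toLinearEquiv.annihilator_eq.trans Module.annihilator_dfinsupp

theorem isSeparator_self_s14 : IsSeparator (of R R) := by
  refine (isSeparator_def _).2 fun M N f g hfg => ?_
  ext m
  simpa using congr($(hfg (ofHom (LinearMap.toSpanSingleton R M m))) 1)

theorem annihilator_obj_self_le (F : ModuleCat.{u} R ⥤ ModuleCat.{u} R)
    [PreservesColimitsOfSize.{u, u} F] (M : ModuleCat.{u} R) :
    Module.annihilator R (F.obj (of R R)) ≤ Module.annihilator R (F.obj M) := by
  have : Epi (Sigma.desc fun f : of R R ⟶ M => f) := (isSeparator_iff_epi _).1 isSeparator_self_s14 M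
  have hsurj : Function.Surjective (F.map (Sigma.desc fun f : of R R ⟶ M => f)) :=
    (epi_iff_surjective _).1 inferInstance
  calc Module.annihilator R (F.obj (of R R))
      = Module.annihilator R ↑(∐ fun _ : of R R ⟶ M => F.obj (of R R) : ModuleCat.{u} R) := by
        rw [annihilator_sigma, iInf_const]
    _ = Module.annihilator R (F.obj (∐ fun _ : of R R ⟶ M => of R R)) :=
        (PreservesCoproduct.iso F _).toLinearEquiv.annihilator_eq.symm
    _ ≤ Module.annihilator R (F.obj M) := LinearMap.annihilator_le_of_surjective _ hsurj

end ModuleCat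

/-- `R ∧ R` is a faithful `R`-module: if `r • x = 0` for all `x : R ∧ R`, then `r = 0`. -/
theorem wedge_self_faithful (R : Type u) [Ring R] (s : AddClosedSymmMonStruct R) (r : R)
    (h : ∀ x : ↥(s.wedge (ModuleCat.of R R) (ModuleCat.of R R)), r • x = 0) : r = 0 := by
  let := s.mon
  let := s.closed
  let RR := ModuleCat.of R R
  have hr : r ∈ Module.annihilator R ↑(RR ⊗ RR : ModuleCat R) := Module.mem_annihilator.2 h
  have hr' : r ∈ Module.annihilator R RR := by
    rw [← (ρ_ RR).toLinearEquiv.annihilator_eq]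
    exact ModuleCat.annihilator_obj_self_le (tensorLeft RR) (𝟙_ _) hr
  rwa [Module.annihilator_eq_bot.2 inferInstance, Ideal.mem_bot] at hr'
end

section
/- Let R be a ring with an additive closed symmetric monoidal structure on the category of left R-modules, with unit object K. Then there is an injective ring homomorphism from the endomorphism ring End_R(K) of the R-module K into the center of R. In particular, End_R(K) is a commutative ring. -/
open CategoryTheory MonoidalCategory

universe u

/-!
An endomorphism `f` of the monoidal unit `K` acts on every object `X` through the left unitor
`X ≅ K ⊗ X` as `f ▷ X`; by the interchange law this is natural in `X`, so it defines an element
of the centre `End (𝟭 C)` of the category, and evaluating at `K` recovers `f`. For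
`C = ModuleCat R`, a natural endomorphism `z` of the identity is determined by `z_R(1)`, since
`z_M(m) = z_R(1) • m` by naturality along `r ↦ r • m`; naturality along `r ↦ r * b` shows that
`z_R(1)` is central. Additivity of `⊗` in the first variable makes the first map additive.
-/

namespace CategoryTheory.MonoidalCategory

variable {C : Type*} [Category C] [Preadditive C] [MonoidalCategory C] [MonoidalPreadditive C]

def unitEndToCatCenter : End (𝟙_ C) →+* CatCenter C :=
  { (leftUnitorNatIso C).conj.toMonoidHom.comp ((tensoringLeft C).mapEnd (𝟙_ C)) with
    map_zero' := by ext X; simp [Iso.conj_apply, Functor.mapEnd]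
    map_add' := fun f g => by
      ext X
      change (λ_ X).inv ≫ (f + g) ▷ X ≫ (λ_ X).hom =
        (λ_ X).inv ≫ f ▷ X ≫ (λ_ X).hom + (λ_ X).inv ≫ g ▷ X ≫ (λ_ X).hom
      rw [MonoidalPreadditive.add_whiskerRight, Preadditive.add_comp, Preadditive.comp_add] }

lemma unitEndToCatCenter_app (f : End (𝟙_ C)) (X : C) :
    (unitEndToCatCenter f).app X = (λ_ X).inv ≫ f ▷ X ≫ (λ_ X).hom := rfl

lemma unitEndToCatCenter_app_unit (f : End (𝟙_ C)) :
    (unitEndToCatCenter f).app (𝟙_ C) = f := by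
  rw [unitEndToCatCenter_app, unitors_equal, rightUnitor_naturality, ← unitors_equal,
    Iso.inv_hom_id_assoc]

lemma unitEndToCatCenter_injective : Function.Injective (unitEndToCatCenter (C := C)) :=
  fun f g h => by
    rw [← unitEndToCatCenter_app_unit f, ← unitEndToCatCenter_app_unit g, h]

end CategoryTheory.MonoidalCategory

namespace ModuleCat

variable {R : Type u} [Ring R]

lemma catCenter_app_self_apply (z : CatCenter (ModuleCat.{u} R)) (r : R) :
    z.app (of R R) r = r * z.app (of R R) 1 := by
  simpa using (z.app (of R R)).hom.map_smul r (1 : R)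

lemma catCenter_app_apply (z : CatCenter (ModuleCat.{u} R)) {M : ModuleCat.{u} R} (m : M) :
    z.app M m = z.app (of R R) 1 • m := by
  simpa using congr($(z.naturality (ofHom (LinearMap.toSpanSingleton R M m))).hom (1 : R))

lemma catCenter_app_self_one_mem_center (z : CatCenter (ModuleCat.{u} R)) :
    z.app (of R R) (1 : R) ∈ Subring.center R := by
  rw [Subring.mem_center_iff]
  intro b
  simpa [catCenter_app_self_apply z b] using catCenter_app_apply z (M := of R R) b

def catCenterToCenter : CatCenter (ModuleCat.{u} R) →+* Subring.center R where
  toFun z := ⟨z.app (of R R) 1, catCenter_app_self_one_mem_center z⟩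
  map_one' := rfl
  map_mul' z w := Subtype.ext <| by
    change (z * w).app (of R R) 1 = _
    rw [CatCenter.mul_app, ConcreteCategory.comp_apply, catCenter_app_self_apply w]
    rfl
  map_zero' := rfl
  map_add' _ _ := rfl

lemma catCenterToCenter_injective : Function.Injective (catCenterToCenter (R := R)) :=
  fun z w h => by
    refine CatCenter.ext _ _ fun M => ?_
    ext m
    rw [catCenter_app_apply z m, catCenter_app_apply w m]
    exact congr($(congrArg Subtype.val h) • m)

end ModuleCat

/-- If `K` is the unit of an additive closed symmetric monoidal structure on the category of
left `R`-modules, then the endomorphism ring `End_R(K)` embeds in the center of `R`;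
in particular it is commutative. -/
theorem endRing_unit_embeds_in_center (R : Type u) [Ring R] (s : AddClosedSymmMonStruct R) :
    ∃ f : Module.End R ↥(s.unit) →+* Subring.center R, Function.Injective f ∧
      ∀ g h : Module.End R ↥(s.unit), g * h = h * g := by
  let := s.mon
  let := s.preadd
  let f : Module.End R ↥(s.unit) →+* Subring.center R :=
    ModuleCat.catCenterToCenter.comp <|
      unitEndToCatCenter.comp (ModuleCat.endRingEquiv (𝟙_ (ModuleCat.{u} R))).symm.toRingHom
  have hf : Function.Injective f :=
    ModuleCat.catCenterToCenter_injective.comp <|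
      unitEndToCatCenter_injective.comp (ModuleCat.endRingEquiv _).symm.injective
  exact ⟨f, hf, fun g h => hf (by rw [map_mul, map_mul, mul_comm])⟩
end

section
/- Let R be a nontrivial ring with an additive closed symmetric monoidal structure on the category of left R-modules, with unit object K. If the only central idempotents of R are 0 and 1 (R is indecomposable as a ring), then K is an indecomposable R-module: K ≠ 0, and whenever M and N are submodules of K with M ⊓ N = ⊥ and M ⊔ N = K, either M = ⊥ or N = ⊥. -/
open CategoryTheory MonoidalCategory

universe u

/-!
An idempotent endomorphism `e` of the unit `K` yields, by conjugating `e ▷ X` with the left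
unitor, an idempotent natural endomorphism of the identity functor of `R`-modules which is `e`
again at `K`. Naturality against the maps `R → X, 1 ↦ x` forces every such natural endomorphism
to be multiplication by a central element of `R`, idempotent here, hence `0` or `1`. So the
projections attached to a decomposition of `K` are trivial. Additivity of `⊗` gives `K ≠ 0`:
otherwise `𝟙 X = λ ∘ (𝟙 K ▷ X) ∘ λ⁻¹` vanishes for every `X`, in particular for `X = R`.
-/

theorem Submodule.eq_bot_or_eq_bot_of_isCompl {R E : Type*} [Ring R] [AddCommGroup E]
    [Module R E] (h : ∀ f : Module.End R E, IsIdempotentElem f → f = 0 ∨ f = 1)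
    {p q : Submodule R E} (hpq : IsCompl p q) : p = ⊥ ∨ q = ⊥ :=
  (h _ (isIdempotentElem_projection hpq)).imp
    (fun h0 => by rw [← range_projection hpq, h0, LinearMap.range_zero])
    (fun h1 => by rw [← ker_projection hpq, h1, Module.End.one_eq_id, LinearMap.ker_id])

namespace CategoryTheory.MonoidalCategory

variable {C : Type*} [Category C] [MonoidalCategory C]

@[simps]
def endUnitNatTrans (e : 𝟙_ C ⟶ 𝟙_ C) : 𝟭 C ⟶ 𝟭 C where
  app X := (λ_ X).inv ≫ e ▷ X ≫ (λ_ X).hom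
  naturality X Y f := by
    simp only [Functor.id_map, Functor.id_obj, Category.assoc, ← leftUnitor_naturality,
      whisker_exchange_assoc, leftUnitor_inv_naturality_assoc]

theorem endUnitNatTrans_app_tensorUnit (e : 𝟙_ C ⟶ 𝟙_ C) :
    (endUnitNatTrans e).app (𝟙_ C) = e := by
  simp [unitors_equal, unitors_inv_equal]

theorem endUnitNatTrans_comp (e e' : 𝟙_ C ⟶ 𝟙_ C) :
    endUnitNatTrans (e ≫ e') = endUnitNatTrans e ≫ endUnitNatTrans e' := by
  ext X
  simp

theorem id_eq_zero_of_id_tensorUnit_eq_zero [Preadditive C] [MonoidalPreadditive C]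
    (h : 𝟙 (𝟙_ C) = 0) (X : C) : 𝟙 X = 0 := by
  calc 𝟙 X = (λ_ X).inv ≫ 𝟙 (𝟙_ C) ▷ X ≫ (λ_ X).hom := by simp
    _ = 0 := by simp [h]

end CategoryTheory.MonoidalCategory

namespace ModuleCat

variable {R : Type u} [Ring R]

def natTransScalar (η : 𝟭 (ModuleCat.{u} R) ⟶ 𝟭 _) : R :=
  (η.app (of R R) : of R R ⟶ of R R) (1 : R)

theorem natTrans_app_apply (η : 𝟭 (ModuleCat.{u} R) ⟶ 𝟭 _) (X : ModuleCat.{u} R) (x : X) :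
    η.app X x = natTransScalar η • x := by
  have hnat : η.app (of R R) ≫ ofHom (LinearMap.toSpanSingleton R X x) =
      ofHom (LinearMap.toSpanSingleton R X x) ≫ η.app X :=
    (η.naturality _).symm
  simpa [natTransScalar] using (ConcreteCategory.congr_hom hnat (1 : R)).symm

theorem natTransScalar_mem_center (η : 𝟭 (ModuleCat.{u} R) ⟶ 𝟭 _) :
    natTransScalar η ∈ Set.center R := by
  rw [Semigroup.mem_center_iff]
  intro r
  have := (η.app (of R R)).hom.map_smul r (1 : R)
  rw [natTrans_app_apply η (of R R) (r • (1 : R))] at this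
  simpa [natTransScalar] using this.symm

theorem natTrans_eq_zero_or_eq_id
    (h : ∀ e ∈ Set.center R, IsIdempotentElem e → e = 0 ∨ e = 1)
    (η : 𝟭 (ModuleCat.{u} R) ⟶ 𝟭 _) (hη : η ≫ η = η) : η = 0 ∨ η = 𝟙 _ := by
  have hz : IsIdempotentElem (natTransScalar η) := by
    have := ConcreteCategory.congr_hom (congr_app hη (of R R)) (1 : R)
    show natTransScalar η * natTransScalar η = natTransScalar η
    simpa [natTrans_app_apply η (of R R)] using this
  rcases h _ (natTransScalar_mem_center η) hz with h0 | h1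
  · left; ext X x; simp [natTrans_app_apply η X x, h0]
  · right; ext X x; simp [natTrans_app_apply η X x, h1]

section Monoidal

variable [MonoidalCategory (ModuleCat.{u} R)]

theorem tensorUnit_hom_eq_zero_or_eq_id
    (h : ∀ e ∈ Set.center R, IsIdempotentElem e → e = 0 ∨ e = 1)
    (e : 𝟙_ (ModuleCat.{u} R) ⟶ 𝟙_ _) (he : e ≫ e = e) : e = 0 ∨ e = 𝟙 _ := by
  rw [← endUnitNatTrans_app_tensorUnit e]
  rcases natTrans_eq_zero_or_eq_id h _ (by rw [← endUnitNatTrans_comp, he]) with h0 | h1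
  · exact Or.inl (by rw [h0, NatTrans.app_zero])
  · exact Or.inr (by rw [h1, NatTrans.id_app]; rfl)

theorem tensorUnit_end_eq_zero_or_eq_one
    (h : ∀ e ∈ Set.center R, IsIdempotentElem e → e = 0 ∨ e = 1)
    (f : Module.End R (𝟙_ (ModuleCat.{u} R))) (hf : IsIdempotentElem f) : f = 0 ∨ f = 1 := by
  simpa [← End.one_def] using tensorUnit_hom_eq_zero_or_eq_id h _ (hf.map (endRingEquiv _).symm)

theorem nontrivial_tensorUnit [Nontrivial R] [MonoidalPreadditive (ModuleCat.{u} R)] :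
    Nontrivial (𝟙_ (ModuleCat.{u} R)) := by
  by_contra hK
  rw [not_nontrivial_iff_subsingleton] at hK
  have h0 := id_eq_zero_of_id_tensorUnit_eq_zero (C := ModuleCat.{u} R)
    (by ext; exact Subsingleton.elim _ _) (of R R)
  exact one_ne_zero (congr_arg (fun g => g.hom (1 : R)) h0)

end Monoidal

end ModuleCat

/-- If `R` is a nontrivial ring whose only central idempotents are `0` and `1`, then the unit `K`
of any additive closed symmetric monoidal structure on the category of left `R`-modules is an
indecomposable module: `K ≠ 0`, and any two complementary submodules of `K` are trivial. -/
theorem unit_indecomposable (R : Type u) [Ring R] [Nontrivial R]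
    (s : AddClosedSymmMonStruct R)
    (h : ∀ e : R, e ∈ Set.center R → e * e = e → e = 0 ∨ e = 1) :
    (∃ x : ↥(s.unit), x ≠ 0) ∧
      ∀ M N : Submodule R ↥(s.unit), M ⊓ N = ⊥ → M ⊔ N = ⊤ → M = ⊥ ∨ N = ⊥ := by
  let := s.mon
  let := s.preadd
  have := ModuleCat.nontrivial_tensorUnit (R := R)
  refine ⟨exists_ne (0 : 𝟙_ (ModuleCat.{u} R)), fun M N hinf hsup => ?_⟩
  exact Submodule.eq_bot_or_eq_bot_of_isCompl
    (ModuleCat.tensorUnit_end_eq_zero_or_eq_one h)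
    ⟨disjoint_iff.mpr hinf, codisjoint_iff.mpr hsup⟩
end
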